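/- Let x be a quaternion and n ∈ ℕ. Then the Cauchy–Riemann–Fueter operator applied to x^n satisfies ∂̄_CRF(x^n) = -Σ_{k=0}^{n-1} x^{n-1-k} (x̄)^k, where ∂̄_CRF = (1/2)(∂/∂x₀ + i ∂/∂x₁ + j ∂/∂x₂ + k ∂/∂x₃). -/

import Mathlib

open scoped Quaternion

/-- The quaternion imaginary units. -/
def qI : ℍ[ℝ] := ⟨0, 1, 0, 0⟩
def qJ : ℍ[ℝ] := ⟨0, 0, 1, 0⟩
def qK : ℍ[ℝ] := ⟨0, 0, 0, 1⟩

/-!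
The derivative of `y ↦ yⁿ` at `x` is the sum of sandwiches `v ↦ x ^ (n - 1 - k) * v * x ^ k`.
Since `a + i a i + j a j + k a k = -2 ā`, the Fueter combination of a sandwich `v ↦ a v b` is
`-(ā b)`, so `∂̄(xⁿ) = -∑ₖ x̄ ^ (n - 1 - k) * x ^ k`; as `x̄` commutes with `x`, reversing the
order of summation gives the claim.
-/

open scoped RightActions

theorem add_units_sandwich_eq_neg_two_smul_star (a : ℍ[ℝ]) :
    a + qI * a * qI + qJ * a * qJ + qK * a * qK = (-2 : ℝ) • star a := by
  ext <;> simp <;> simp [qI, qJ, qK] <;> ring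

/-- The Cauchy–Riemann–Fueter operator, as a function of the derivative at a point. -/
noncomputable def fueter : (ℍ[ℝ] →L[ℝ] ℍ[ℝ]) →ₗ[ℝ] ℍ[ℝ] where
  toFun L := (2 : ℝ)⁻¹ • (L 1 + qI * L qI + qJ * L qJ + qK * L qK)
  map_add' L M := by
    simp only [add_apply, mul_add, ← smul_add]
    abel_nf
  map_smul' c L := by
    simp only [smul_apply, mul_smul_comm, RingHom.id_apply, ← smul_add]
    rw [smul_comm]

theorem fueter_apply (L : ℍ[ℝ] →L[ℝ] ℍ[ℝ]) :
    fueter L = (2 : ℝ)⁻¹ • (L 1 + qI * L qI + qJ * L qJ + qK * L qK) :=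
  rfl

theorem fueter_smul_id_smul (a b : ℍ[ℝ]) :
    fueter (a •> ContinuousLinearMap.id ℝ ℍ[ℝ] <• b) = -(star a * b) := by
  have hL : ∀ v, (a •> ContinuousLinearMap.id ℝ ℍ[ℝ] <• b) v = a * v * b := fun v => by
    simp [mul_assoc]
  rw [fueter_apply, hL, hL, hL, hL]
  calc (2 : ℝ)⁻¹ • (a * 1 * b + qI * (a * qI * b) + qJ * (a * qJ * b) + qK * (a * qK * b))
      = (2 : ℝ)⁻¹ • ((a + qI * a * qI + qJ * a * qJ + qK * a * qK) * b) := by noncomm_ring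
    _ = (2 : ℝ)⁻¹ • ((-2 : ℝ) • star a * b) := by rw [add_units_sandwich_eq_neg_two_smul_star]
    _ = -(star a * b) := by rw [smul_mul_assoc, smul_smul]; norm_num

theorem CRF_of_pow (n : ℕ) (x : ℍ[ℝ]) :
    (2 : ℝ)⁻¹ •
      (fderiv ℝ (fun y : ℍ[ℝ] => y ^ n) x 1
        + qI * fderiv ℝ (fun y : ℍ[ℝ] => y ^ n) x qI
        + qJ * fderiv ℝ (fun y : ℍ[ℝ] => y ^ n) x qJ
        + qK * fderiv ℝ (fun y : ℍ[ℝ] => y ^ n) x qK)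
    = -∑ k ∈ Finset.range n, x ^ (n - 1 - k) * (star x) ^ k := by
  rw [← fueter_apply, fderiv_pow_ring', map_sum]
  simp only [fueter_smul_id_smul, Finset.sum_neg_distrib, star_pow, Nat.pred_eq_sub_one]
  rw [← Finset.sum_range_reflect]
  refine congrArg Neg.neg (Finset.sum_congr rfl fun k hkn => ?_)
  have hreflect : n - 1 - (n - 1 - k) = k := by rw [Finset.mem_range] at hkn; omega
  rw [hreflect, ((star_comm_self (x := x)).pow_pow _ _).eq]
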